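/- For a cyclic group Z_m acting on positions, rotating a placement along an odd cycle of length 2k+1 the appropriate number of times realizes any cyclic shift of the k pieces: for any j, j', h, h' with j ≡ h and j' ≡ h' (mod 2), the placement p_{j,h} can be reconfigured to p_{j',h'} using at most k² + k slide operations. -/

import Mathlib

open SimpleGraph

/-- A placement of `n` labeled pieces on edges of `G`, pairwise vertex-disjoint. -/
structure Placement {V : Type*} (G : SimpleGraph V) (n : ℕ) where
  f : Fin n → Sym2 V
  mem_edgeSet : ∀ i, f i ∈ G.edgeSet
  disj : ∀ i j, i ≠ j → ∀ x, x ∈ f i → x ∉ f j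

def Placement.exposes {V : Type*} {G : SimpleGraph V} {n : ℕ}
    (p : Placement G n) (v : V) : Prop :=
  ∀ i, v ∉ p.f i

/-- Slide operation. -/
def Slide {V : Type*} {G : SimpleGraph V} {n : ℕ} (p q : Placement G n) : Prop :=
  ∃ (j : Fin n) (u w v : V), p.exposes v ∧ p.f j = s(u, w) ∧ G.Adj w v ∧
    q.f j = s(w, v) ∧ ∀ i, i ≠ j → q.f i = p.f i

/-- `ReachableIn r m a b`: `b` is reachable from `a` in exactly `m` steps of `r`. -/
def ReachableIn {α : Type*} (r : α → α → Prop) : ℕ → α → α → Prop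
  | 0 => fun a b => a = b
  | (m + 1) => fun a b => ∃ c, r a c ∧ ReachableIn r m c b

/-- The cycle of length `2k+1` on vertices `ZMod (2k+1)`. -/
def CycZ (k : ℕ) : SimpleGraph (ZMod (2 * k + 1)) :=
  SimpleGraph.fromRel (fun a b => b = a + 1)

/-- The placement `p_{j,h}` on the odd cycle: piece `i ∈ [k]` occupies the edge
`(h+2i-2, h+2i-1)` if `h+2i-1 < j` and `(h+2i-1, h+2i)` if `j < h+2i-1`,
labels taken in `ZMod (2k+1)` (comparison via canonical representatives);
vertex `j` is exposed. (Here `i : Fin k` represents the piece `i+1 ∈ [k]`.) -/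
def pjh (k j h : ℕ) : Fin k → Sym2 (ZMod (2 * k + 1)) :=
  fun i =>
    if (((h + 2 * (i : ℕ) + 1 : ℕ) : ZMod (2 * k + 1)).val)
        < (((j : ℕ) : ZMod (2 * k + 1)).val) then
      s(((h + 2 * (i : ℕ) : ℕ) : ZMod (2 * k + 1)),
        ((h + 2 * (i : ℕ) + 1 : ℕ) : ZMod (2 * k + 1)))
    else
      s(((h + 2 * (i : ℕ) + 1 : ℕ) : ZMod (2 * k + 1)),
        ((h + 2 * (i : ℕ) + 2 : ℕ) : ZMod (2 * k + 1)))

/-!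
Since the pieces of a placement are disjoint, the pieces of `p_{j,h}` lying on the earlier edge
`(h+2i, h+2i+1)` are exactly those with `i < m` for some `m ≤ k`: the pieces are packed along the
cycle from `h` with a single gap at `h + 2m`. Sliding piece `m - 1` into the gap moves the gap to
`h + 2m - 2`, and the packing with `m = 0` is the packing from `h + 1` with `m = k`. So all these
placements lie on one closed orbit of `k(2k+1)` slides, and of the two arcs joining two of them one
has at most `k(2k+1)/2 ≤ k² + k` slides.
-/

namespace ReachableIn

variable {α : Type*} {r : α → α → Prop}

theorem snoc {d : ℕ} {a b c : α} (hab : ReachableIn r d a b) (hbc : r b c) :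
    ReachableIn r (d + 1) a c := by
  induction d generalizing a with
  | zero => exact ⟨c, hab ▸ hbc, rfl⟩
  | succ d ih =>
    obtain ⟨x, hax, hxb⟩ := hab
    exact ⟨x, hax, ih hxb⟩

theorem symm [Std.Symm r] {d : ℕ} {a b : α} (hab : ReachableIn r d a b) :
    ReachableIn r d b a := by
  induction d generalizing a with
  | zero => exact Eq.symm hab
  | succ d ih =>
    obtain ⟨x, hax, hxb⟩ := hab
    exact (ih hxb).snoc (symm_of r hax)

theorem of_chain {f : ℕ → α} (hf : ∀ t, r (f t) (f (t + 1))) (a d : ℕ) :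
    ReachableIn r d (f a) (f (a + d)) := by
  induction d generalizing a with
  | zero => rfl
  | succ d ih => exact ⟨f (a + 1), hf a, by rw [← add_assoc, add_right_comm]; exact ih (a + 1)⟩

theorem exists_le_half_of_periodic [Std.Symm r] {f : ℕ → α} {N : ℕ}
    (hf : ∀ t, r (f t) (f (t + 1))) (hper : Function.Periodic f N) (hN : 0 < N) (a b : ℕ) :
    ∃ d ≤ N / 2, ReachableIn r d (f a) (f b) := by
  have arc : ∀ a b, a ≤ b → b < a + N → ∃ d ≤ N / 2, ReachableIn r d (f a) (f b) := by
    intro a b hab hba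
    rcases le_or_gt (b - a) (N / 2) with hd | hd
    · exact ⟨b - a, hd, by simpa [Nat.add_sub_cancel' hab] using of_chain hf a (b - a)⟩
    · refine ⟨N - (b - a), by omega, symm ?_⟩
      simpa [show b + (N - (b - a)) = a + N by omega, hper a] using of_chain hf b (N - (b - a))
  rw [← hper.map_mod_nat a, ← hper.map_mod_nat b]
  have ha := Nat.mod_lt a hN
  have hb := Nat.mod_lt b hN
  rcases le_total (a % N) (b % N) with h | h
  · exact arc _ _ h (by omega)
  · obtain ⟨d, hd, hba⟩ := arc _ _ h (by omega)
    exact ⟨d, hd, hba.symm⟩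

end ReachableIn

@[ext]
theorem Placement.ext {V : Type*} {G : SimpleGraph V} {n : ℕ} {p q : Placement G n}
    (h : p.f = q.f) : p = q := by
  cases p; cases q; cases h; rfl

/-- The vertex a piece leaves is exposed afterwards, so the piece can slide back. -/
instance Slide.instSymm {V : Type*} {G : SimpleGraph V} {n : ℕ} :
    Std.Symm (Slide (G := G) (n := n)) where
  symm p q := by
    rintro ⟨j, u, w, v, hv, hpj, -, hqj, hq⟩
    have hu : u ∈ p.f j := by simp [hpj]
    have huw : G.Adj u w := by simpa [hpj] using p.mem_edgeSet j
    refine ⟨j, v, w, u, fun i hui => ?_, by rw [hqj, Sym2.eq_swap], huw.symm,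
      by rw [hpj, Sym2.eq_swap], fun i hi => (hq i hi).symm⟩
    by_cases hij : i = j
    · subst hij
      rw [hqj, Sym2.mem_iff] at hui
      rcases hui with rfl | rfl
      · exact huw.ne rfl
      · exact hv i hu
    · exact p.disj j i (Ne.symm hij) u hu (hq i hij ▸ hui)

theorem add_natCast_eq_add_natCast_iff {n a b : ℕ} (x : ZMod n) (ha : a < n) (hb : b < n) :
    x + a = x + b ↔ a = b := by
  rw [add_right_inj, ZMod.natCast_eq_natCast_iff', Nat.mod_eq_of_lt ha, Nat.mod_eq_of_lt hb]

theorem cycZ_adj_add_one {k : ℕ} (hk : 0 < k) (x : ZMod (2 * k + 1)) : (CycZ k).Adj x (x + 1) := by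
  refine (SimpleGraph.fromRel_adj _ _ _).2 ⟨fun h => ?_, Or.inl rfl⟩
  have := (add_natCast_eq_add_natCast_iff x (a := 0) (b := 1) (by omega) (by omega)).1
    (by rw [Nat.cast_zero, Nat.cast_one, add_zero]; exact h)
  omega

/-- Piece `i` covers the offsets `gapOffset m i` and `gapOffset m i + 1`: the pieces are packed
along the cycle, leaving the single gap at offset `2 * m`. -/
def gapOffset (m i : ℕ) : ℕ := if m ≤ i then 2 * i + 1 else 2 * i

theorem gapOffset_add_ne {m i i' δ δ' : ℕ} (hi : i ≠ i') (hδ : δ ≤ 1) (hδ' : δ' ≤ 1) :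
    gapOffset m i + δ ≠ gapOffset m i' + δ' := by
  unfold gapOffset; split_ifs <;> omega

theorem gapOffset_add_ne_two_mul {m i δ : ℕ} (hδ : δ ≤ 1) : gapOffset m i + δ ≠ 2 * m := by
  unfold gapOffset; split_ifs <;> omega

section GapPlacement

variable {k : ℕ}

def gapEdges (k : ℕ) (h : ZMod (2 * k + 1)) (m : ℕ) (i : Fin k) : Sym2 (ZMod (2 * k + 1)) :=
  s(h + (gapOffset m i : ℕ), h + (gapOffset m i + 1 : ℕ))

theorem mem_gapEdges_iff {h x : ZMod (2 * k + 1)} {m : ℕ} {i : Fin k} :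
    x ∈ gapEdges k h m i ↔ ∃ δ ≤ 1, x = h + (gapOffset m i + δ : ℕ) := by
  rw [gapEdges, Sym2.mem_iff]
  constructor
  · rintro (rfl | rfl)
    exacts [⟨0, zero_le_one, rfl⟩, ⟨1, le_rfl, rfl⟩]
  · rintro ⟨δ, hδ, rfl⟩
    interval_cases δ
    exacts [Or.inl rfl, Or.inr rfl]

theorem gapOffset_add_lt {m δ : ℕ} (i : Fin k) (hδ : δ ≤ 1) : gapOffset m i + δ < 2 * k + 1 := by
  have := i.isLt; unfold gapOffset; split_ifs <;> omega

def gapPlacement (k : ℕ) (h : ZMod (2 * k + 1)) (m : ℕ) : Placement (CycZ k) k where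
  f := gapEdges k h m
  mem_edgeSet i := by
    rw [gapEdges, SimpleGraph.mem_edgeSet, Nat.cast_succ, ← add_assoc]
    exact cycZ_adj_add_one i.pos _
  disj i i' hii' x hx hx' := by
    obtain ⟨δ, hδ, rfl⟩ := mem_gapEdges_iff.1 hx
    obtain ⟨δ', hδ', hx'⟩ := mem_gapEdges_iff.1 hx'
    rw [add_natCast_eq_add_natCast_iff _ (gapOffset_add_lt i hδ) (gapOffset_add_lt i' hδ')] at hx'
    exact gapOffset_add_ne (Fin.val_ne_of_ne hii') hδ hδ' hx'

theorem gapPlacement_exposes {m : ℕ} (hm : m ≤ k) (h : ZMod (2 * k + 1)) :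
    (gapPlacement k h m).exposes (h + (2 * m : ℕ)) := by
  intro i hi
  obtain ⟨δ, hδ, hx⟩ := mem_gapEdges_iff.1 hi
  rw [add_natCast_eq_add_natCast_iff _ (by omega) (gapOffset_add_lt i hδ)] at hx
  exact gapOffset_add_ne_two_mul hδ hx.symm

theorem slide_gapPlacement_succ {m : ℕ} (hm : m < k) (h : ZMod (2 * k + 1)) :
    Slide (gapPlacement k h (m + 1)) (gapPlacement k h m) := by
  have hoff : gapOffset (m + 1) m = 2 * m := by simp [gapOffset]
  have hoff' : gapOffset m m = 2 * m + 1 := by simp [gapOffset]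
  refine ⟨⟨m, hm⟩, h + (2 * m : ℕ), h + (2 * m + 1 : ℕ), h + (2 * m + 1 + 1 : ℕ),
    gapPlacement_exposes (m := m + 1) hm h, by simp [gapPlacement, gapEdges, hoff], ?_,
    by simp only [gapPlacement, gapEdges, hoff'], fun i hi => ?_⟩
  · rw [Nat.cast_succ (2 * m + 1), ← add_assoc]
    exact cycZ_adj_add_one (by omega) _
  · have hi : (i : ℕ) ≠ m := fun h => hi (Fin.ext h)
    have : gapOffset (m + 1) i = gapOffset m i := by unfold gapOffset; split_ifs <;> omega
    simp [gapPlacement, gapEdges, this]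

theorem gapPlacement_zero (h : ZMod (2 * k + 1)) :
    gapPlacement k h 0 = gapPlacement k (h + 1) k := by
  ext1; funext i
  simp only [gapPlacement, gapEdges, gapOffset, zero_le, if_true, i.isLt.not_ge, if_false]
  congr 1 <;> push_cast <;> ring

end GapPlacement

section GapOrbit

variable {k : ℕ}

/-- Writing `t = k * q + r` with `r < k`, the `t`-th placement of the orbit is the gap placement
based at `q` with gap index `k - r`: every `k` slides the base advances by one. -/
def gapOrbit (k t : ℕ) : Placement (CycZ k) k := gapPlacement k (t / k : ℕ) (k - t % k)

theorem slide_gapOrbit_succ (hk : 0 < k) (t : ℕ) : Slide (gapOrbit k t) (gapOrbit k (t + 1)) := by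
  obtain ⟨q, r, hr, rfl⟩ : ∃ q r, r < k ∧ t = k * q + r :=
    ⟨t / k, t % k, Nat.mod_lt t hk, (Nat.div_add_mod t k).symm⟩
  have hdiv : (k * q + r) / k = q := by
    rw [Nat.mul_add_div hk, Nat.div_eq_of_lt hr, add_zero]
  have hmod : (k * q + r) % k = r := by rw [Nat.mul_add_mod, Nat.mod_eq_of_lt hr]
  rcases Nat.lt_or_ge (r + 1) k with hr1 | hr1
  · have hdiv' : (k * q + (r + 1)) / k = q := by
      rw [Nat.mul_add_div hk, Nat.div_eq_of_lt hr1, add_zero]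
    have hmod' : (k * q + (r + 1)) % k = r + 1 := by rw [Nat.mul_add_mod, Nat.mod_eq_of_lt hr1]
    rw [gapOrbit, gapOrbit, hdiv, hmod, add_assoc, hdiv', hmod',
      show k - r = k - (r + 1) + 1 by omega]
    exact slide_gapPlacement_succ (by omega) _
  · have hr1 : r + 1 = k := by omega
    rw [gapOrbit, gapOrbit, hdiv, hmod, add_assoc, hr1, ← mul_add_one,
      Nat.mul_div_cancel_left _ hk, Nat.mul_mod_right, Nat.sub_zero, Nat.cast_add_one,
      ← gapPlacement_zero, show k - r = 0 + 1 by omega]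
    exact slide_gapPlacement_succ hk _

theorem periodic_gapOrbit (hk : 0 < k) : Function.Periodic (gapOrbit k) (k * (2 * k + 1)) := by
  intro t
  rw [gapOrbit, gapOrbit, Nat.add_mul_div_left _ _ hk, Nat.add_mul_mod_self_left, Nat.cast_add,
    ZMod.natCast_self, add_zero]

theorem gapOrbit_eq_gapPlacement (hk : 0 < k) {m : ℕ} (hm : m ≤ k) (h : ZMod (2 * k + 1)) :
    gapOrbit k (k * h.val + (k - m)) = gapPlacement k h m := by
  rcases Nat.eq_zero_or_pos m with rfl | hm0
  · rw [Nat.sub_zero, ← mul_add_one, gapOrbit, Nat.mul_div_cancel_left _ hk, Nat.mul_mod_right,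
      Nat.sub_zero, Nat.cast_add_one, ZMod.natCast_zmod_val, gapPlacement_zero]
  · have hlt : k - m < k := by omega
    rw [gapOrbit, Nat.mul_add_div hk, Nat.div_eq_of_lt hlt, add_zero, Nat.mul_add_mod,
      Nat.mod_eq_of_lt hlt, ZMod.natCast_zmod_val, Nat.sub_sub_self hm]

theorem exists_reachableIn_gapPlacement (hk : 0 < k) {m m' : ℕ} (hm : m ≤ k) (hm' : m' ≤ k)
    (h h' : ZMod (2 * k + 1)) :
    ∃ d ≤ k ^ 2 + k, ReachableIn Slide d (gapPlacement k h m) (gapPlacement k h' m') := by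
  obtain ⟨d, hd, hreach⟩ := ReachableIn.exists_le_half_of_periodic (slide_gapOrbit_succ hk)
    (periodic_gapOrbit hk) (by positivity) (k * h.val + (k - m)) (k * h'.val + (k - m'))
  rw [gapOrbit_eq_gapPlacement hk hm, gapOrbit_eq_gapPlacement hk hm'] at hreach
  refine ⟨d, hd.trans ?_, hreach⟩
  rw [Nat.div_le_iff_le_mul_add_pred two_pos]
  nlinarith

end GapOrbit

/-- Were piece `i` on its late edge `(h+2i+1, h+2i+2)` and piece `i + 1` on its early edge, both
would cover `h + 2i + 2`; so the early pieces form an initial segment. -/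
theorem exists_eq_gapPlacement_of_pjh {k j h : ℕ} (p : Placement (CycZ k) k)
    (hp : p.f = pjh k j h) : ∃ m ≤ k, p = gapPlacement k h m := by
  set early : ℕ → Prop := fun i =>
    i < k ∧ ((h + 2 * i + 1 : ℕ) : ZMod (2 * k + 1)).val < ((j : ℕ) : ZMod (2 * k + 1)).val
  have hanti : Antitone early := antitone_nat_of_succ_le fun i ⟨hi, hearly⟩ => by
    refine ⟨by omega, by_contra fun hlate => ?_⟩
    have hmem : ((h + 2 * i + 2 : ℕ) : ZMod (2 * k + 1)) ∈ p.f ⟨i, by omega⟩ := by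
      simp only [hp, pjh, hlate, if_false]
      exact Sym2.mem_mk_right _ _
    refine p.disj ⟨i, by omega⟩ ⟨i + 1, hi⟩ (by simp) _ hmem ?_
    have hstep : h + 2 * (i + 1) = h + 2 * i + 2 := by ring
    rw [hstep] at hearly
    simp only [hp, pjh, hstep, hearly, if_true]
    exact Sym2.mem_mk_left _ _
  obtain ⟨m, hm⟩ := ((isLowerSet_setOfPred (p := early)).2 hanti).eq_univ_or_Iio.resolve_left
    fun huniv => (Set.eq_univ_iff_forall.1 huniv k).1.false
  have hearly : ∀ i, early i ↔ i < m := fun i => Set.ext_iff.1 hm i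
  refine ⟨m, not_lt.1 fun hkm => ((hearly k).2 hkm).1.false, Placement.ext (funext fun i => ?_)⟩
  have hi := hearly i
  simp only [early, i.isLt, true_and] at hi
  rw [hp]
  change pjh k j h i = gapEdges k h m i
  rw [pjh, gapEdges, gapOffset]
  by_cases him : (i : ℕ) < m
  · rw [if_pos (hi.2 him), if_neg (not_le.2 him)]
    congr 1 <;> push_cast <;> ring
  · rw [if_neg (mt hi.1 him), if_pos (not_lt.1 him)]
    congr 1 <;> push_cast <;> ring

theorem stmt5_general (k : ℕ) (hk : 1 ≤ k) (j j' h h' : ℕ)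
    (p q : Placement (CycZ k) k) (hp : p.f = pjh k j h) (hq : q.f = pjh k j' h') :
    ∃ m ≤ k ^ 2 + k, ReachableIn Slide m p q := by
  obtain ⟨m, hm, rfl⟩ := exists_eq_gapPlacement_of_pjh p hp
  obtain ⟨m', hm', rfl⟩ := exists_eq_gapPlacement_of_pjh q hq
  exact exists_reachableIn_gapPlacement hk hm hm' _ _

theorem stmt5 (k : ℕ) (hk : 1 ≤ k) (j j' h h' : ℕ)
    (hjle : 1 ≤ j ∧ j ≤ 2 * k + 1) (hj'le : 1 ≤ j' ∧ j' ≤ 2 * k + 1)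
    (hhle : 1 ≤ h ∧ h ≤ 2 * k + 1) (hh'le : 1 ≤ h' ∧ h' ≤ 2 * k + 1)
    (hparity : j % 2 = h % 2) (hparity' : j' % 2 = h' % 2)
    (p q : Placement (CycZ k) k) (hp : p.f = pjh k j h) (hq : q.f = pjh k j' h') :
    ∃ m ≤ k ^ 2 + k, ReachableIn Slide m p q :=
  stmt5_general k hk j j' h h' p q hp hq
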